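/- There exists κ > 0, depending only on c1, c2, σ0, σ1, such that for every Φ ∈ ℝ⁴ with |Φ| < 2κ and φ2 ≠ 0, the quantities K(Φ) and N(Φ) are nonzero and the left and right eigenvectors are dual to each other: lᵢ(Φ) · rⱼ(Φ) = δᵢⱼ for all i, j ∈ {1,2,3,4}, where · is the Euclidean inner product and δᵢⱼ is the Kronecker delta. -/

import Mathlib

noncomputable section

open Real Matrix Set

namespace ElasticIP

/-- Euclidean norm on `ℝ⁴` (presented as `Fin 4 → ℝ`). -/
def eucNorm4 (Φ : Fin 4 → ℝ) : ℝ := Real.sqrt (∑ i, (Φ i) ^ 2)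

/-- `a(Φ) = c₁² + 2σ₀φ₁`. -/
def aF (c1 σ0 : ℝ) (Φ : Fin 4 → ℝ) : ℝ := c1 ^ 2 + 2 * σ0 * Φ 0

/-- `b(Φ) = c₂² + 2σ₁φ₁`. -/
def bF (c2 σ1 : ℝ) (Φ : Fin 4 → ℝ) : ℝ := c2 ^ 2 + 2 * σ1 * Φ 0

/-- `c(Φ) = 2σ₁φ₂`. -/
def cF (σ1 : ℝ) (Φ : Fin 4 → ℝ) : ℝ := 2 * σ1 * Φ 1

/-- `Δ = (a-b)² + 4c²`. -/
def ΔF (c1 c2 σ0 σ1 : ℝ) (Φ : Fin 4 → ℝ) : ℝ :=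
  (aF c1 σ0 Φ - bF c2 σ1 Φ) ^ 2 + 4 * cF σ1 Φ ^ 2

/-- The coefficient matrix `A(Φ)` of the first-order system. -/
def AM (c1 c2 σ0 σ1 : ℝ) (Φ : Fin 4 → ℝ) : Matrix (Fin 4) (Fin 4) ℝ :=
  !![0, 0, -1, 0;
     0, 0, 0, -1;
     -aF c1 σ0 Φ, -cF σ1 Φ, 0, 0;
     -cF σ1 Φ, -bF c2 σ1 Φ, 0, 0]

/-- `λ₁ = √(((a+b)+√Δ)/2)`. -/
def lam1 (c1 c2 σ0 σ1 : ℝ) (Φ : Fin 4 → ℝ) : ℝ :=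
  Real.sqrt ((aF c1 σ0 Φ + bF c2 σ1 Φ + Real.sqrt (ΔF c1 c2 σ0 σ1 Φ)) / 2)

/-- `λ₂ = √(((a+b)-√Δ)/2)`. -/
def lam2 (c1 c2 σ0 σ1 : ℝ) (Φ : Fin 4 → ℝ) : ℝ :=
  Real.sqrt ((aF c1 σ0 Φ + bF c2 σ1 Φ - Real.sqrt (ΔF c1 c2 σ0 σ1 Φ)) / 2)

/-- `λ₃ = -λ₂`. -/
def lam3 (c1 c2 σ0 σ1 : ℝ) (Φ : Fin 4 → ℝ) : ℝ := - lam2 c1 c2 σ0 σ1 Φ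

/-- `λ₄ = -λ₁`. -/
def lam4 (c1 c2 σ0 σ1 : ℝ) (Φ : Fin 4 → ℝ) : ℝ := - lam1 c1 c2 σ0 σ1 Φ

/-- Right eigenvector `r₁`. -/
def r1 (c1 c2 σ0 σ1 : ℝ) (Φ : Fin 4 → ℝ) : Fin 4 → ℝ :=
  ![(lam1 c1 c2 σ0 σ1 Φ ^ 2 - bF c2 σ1 Φ) / (2 * σ1),
    Φ 1,
    -(lam1 c1 c2 σ0 σ1 Φ * (lam1 c1 c2 σ0 σ1 Φ ^ 2 - bF c2 σ1 Φ)) / (2 * σ1),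
    -(lam1 c1 c2 σ0 σ1 Φ) * Φ 1]

/-- Right eigenvector `r₂`. -/
def r2 (c1 c2 σ0 σ1 : ℝ) (Φ : Fin 4 → ℝ) : Fin 4 → ℝ :=
  ![(lam2 c1 c2 σ0 σ1 Φ ^ 2 - bF c2 σ1 Φ) / (2 * σ1),
    Φ 1,
    -(lam2 c1 c2 σ0 σ1 Φ * (lam2 c1 c2 σ0 σ1 Φ ^ 2 - bF c2 σ1 Φ)) / (2 * σ1),
    -(lam2 c1 c2 σ0 σ1 Φ) * Φ 1]

/-- Right eigenvector `r₃`. -/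
def r3 (c1 c2 σ0 σ1 : ℝ) (Φ : Fin 4 → ℝ) : Fin 4 → ℝ :=
  ![(lam2 c1 c2 σ0 σ1 Φ ^ 2 - bF c2 σ1 Φ) / (2 * σ1),
    Φ 1,
    lam2 c1 c2 σ0 σ1 Φ * (lam2 c1 c2 σ0 σ1 Φ ^ 2 - bF c2 σ1 Φ) / (2 * σ1),
    lam2 c1 c2 σ0 σ1 Φ * Φ 1]

/-- Right eigenvector `r₄`. -/
def r4 (c1 c2 σ0 σ1 : ℝ) (Φ : Fin 4 → ℝ) : Fin 4 → ℝ :=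
  ![(lam1 c1 c2 σ0 σ1 Φ ^ 2 - bF c2 σ1 Φ) / (2 * σ1),
    Φ 1,
    lam1 c1 c2 σ0 σ1 Φ * (lam1 c1 c2 σ0 σ1 Φ ^ 2 - bF c2 σ1 Φ) / (2 * σ1),
    lam1 c1 c2 σ0 σ1 Φ * Φ 1]

/-- `K = (Δ + (a-b)√Δ)/(4σ₁²)`. -/
def KF (c1 c2 σ0 σ1 : ℝ) (Φ : Fin 4 → ℝ) : ℝ :=
  (ΔF c1 c2 σ0 σ1 Φ + (aF c1 σ0 Φ - bF c2 σ1 Φ) * Real.sqrt (ΔF c1 c2 σ0 σ1 Φ)) / (4 * σ1 ^ 2)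

/-- `N = (Δ - (a-b)√Δ)/(4σ₁²)`. -/
def NF (c1 c2 σ0 σ1 : ℝ) (Φ : Fin 4 → ℝ) : ℝ :=
  (ΔF c1 c2 σ0 σ1 Φ - (aF c1 σ0 Φ - bF c2 σ1 Φ) * Real.sqrt (ΔF c1 c2 σ0 σ1 Φ)) / (4 * σ1 ^ 2)

/-- Left eigenvector `l₁`. -/
def l1 (c1 c2 σ0 σ1 : ℝ) (Φ : Fin 4 → ℝ) : Fin 4 → ℝ :=
  (KF c1 c2 σ0 σ1 Φ)⁻¹ •
    ![(lam1 c1 c2 σ0 σ1 Φ ^ 2 - bF c2 σ1 Φ) / (2 * σ1),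
      Φ 1,
      -((lam1 c1 c2 σ0 σ1 Φ ^ 2 - bF c2 σ1 Φ) / (2 * σ1 * lam1 c1 c2 σ0 σ1 Φ)),
      -(Φ 1 / lam1 c1 c2 σ0 σ1 Φ)]

/-- Left eigenvector `l₂`. -/
def l2 (c1 c2 σ0 σ1 : ℝ) (Φ : Fin 4 → ℝ) : Fin 4 → ℝ :=
  (NF c1 c2 σ0 σ1 Φ)⁻¹ •
    ![(lam2 c1 c2 σ0 σ1 Φ ^ 2 - bF c2 σ1 Φ) / (2 * σ1),
      Φ 1,
      -((lam2 c1 c2 σ0 σ1 Φ ^ 2 - bF c2 σ1 Φ) / (2 * σ1 * lam2 c1 c2 σ0 σ1 Φ)),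
      -(Φ 1 / lam2 c1 c2 σ0 σ1 Φ)]

/-- Left eigenvector `l₃`. -/
def l3 (c1 c2 σ0 σ1 : ℝ) (Φ : Fin 4 → ℝ) : Fin 4 → ℝ :=
  (NF c1 c2 σ0 σ1 Φ)⁻¹ •
    ![(lam2 c1 c2 σ0 σ1 Φ ^ 2 - bF c2 σ1 Φ) / (2 * σ1),
      Φ 1,
      (lam2 c1 c2 σ0 σ1 Φ ^ 2 - bF c2 σ1 Φ) / (2 * σ1 * lam2 c1 c2 σ0 σ1 Φ),
      Φ 1 / lam2 c1 c2 σ0 σ1 Φ]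

/-- Left eigenvector `l₄`. -/
def l4 (c1 c2 σ0 σ1 : ℝ) (Φ : Fin 4 → ℝ) : Fin 4 → ℝ :=
  (KF c1 c2 σ0 σ1 Φ)⁻¹ •
    ![(lam1 c1 c2 σ0 σ1 Φ ^ 2 - bF c2 σ1 Φ) / (2 * σ1),
      Φ 1,
      (lam1 c1 c2 σ0 σ1 Φ ^ 2 - bF c2 σ1 Φ) / (2 * σ1 * lam1 c1 c2 σ0 σ1 Φ),
      Φ 1 / lam1 c1 c2 σ0 σ1 Φ]

/-- Indexed eigenvalues `λᵢ`, `i = 1,…,4` realised as `i : Fin 4`. -/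
def lamI (c1 c2 σ0 σ1 : ℝ) (i : Fin 4) (Φ : Fin 4 → ℝ) : ℝ :=
  match i with
  | 0 => lam1 c1 c2 σ0 σ1 Φ
  | 1 => lam2 c1 c2 σ0 σ1 Φ
  | 2 => lam3 c1 c2 σ0 σ1 Φ
  | 3 => lam4 c1 c2 σ0 σ1 Φ

/-- Indexed right eigenvectors `rᵢ`. -/
def rI (c1 c2 σ0 σ1 : ℝ) (i : Fin 4) (Φ : Fin 4 → ℝ) : Fin 4 → ℝ :=
  match i with
  | 0 => r1 c1 c2 σ0 σ1 Φ
  | 1 => r2 c1 c2 σ0 σ1 Φ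
  | 2 => r3 c1 c2 σ0 σ1 Φ
  | 3 => r4 c1 c2 σ0 σ1 Φ

/-- Indexed left eigenvectors `lᵢ`. -/
def lI (c1 c2 σ0 σ1 : ℝ) (i : Fin 4) (Φ : Fin 4 → ℝ) : Fin 4 → ℝ :=
  match i with
  | 0 => l1 c1 c2 σ0 σ1 Φ
  | 1 => l2 c1 c2 σ0 σ1 Φ
  | 2 => l3 c1 c2 σ0 σ1 Φ
  | 3 => l4 c1 c2 σ0 σ1 Φ

/-- Jacobian matrix of a map `ℝ⁴ → ℝ⁴`. -/
def jac (f : (Fin 4 → ℝ) → (Fin 4 → ℝ)) (Φ : Fin 4 → ℝ) : Matrix (Fin 4) (Fin 4) ℝ :=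
  fun i j => fderiv ℝ (fun Ψ => f Ψ i) Φ (Pi.single j 1)

/-- `cⁱᵢₘ(Φ) = ∇λᵢ(Φ) · rₘ(Φ)`. -/
def cCo (c1 c2 σ0 σ1 : ℝ) (i m : Fin 4) (Φ : Fin 4 → ℝ) : ℝ :=
  fderiv ℝ (lamI c1 c2 σ0 σ1 i) Φ (rI c1 c2 σ0 σ1 m Φ)

/-- `γⁱᵢₘ(Φ) = -(λᵢ-λₘ) lᵢ · (Drᵢ rₘ - Drₘ rᵢ)`. -/
def gammaII (c1 c2 σ0 σ1 : ℝ) (i m : Fin 4) (Φ : Fin 4 → ℝ) : ℝ :=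
  -(lamI c1 c2 σ0 σ1 i Φ - lamI c1 c2 σ0 σ1 m Φ) *
    (lI c1 c2 σ0 σ1 i Φ ⬝ᵥ
      (jac (rI c1 c2 σ0 σ1 i) Φ *ᵥ rI c1 c2 σ0 σ1 m Φ -
        jac (rI c1 c2 σ0 σ1 m) Φ *ᵥ rI c1 c2 σ0 σ1 i Φ))

/-- `γⁱₖₘ(Φ) = -(λₖ-λₘ) lᵢ · (Drₖ rₘ)`. -/
def gammaKM (c1 c2 σ0 σ1 : ℝ) (i k m : Fin 4) (Φ : Fin 4 → ℝ) : ℝ :=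
  -(lamI c1 c2 σ0 σ1 k Φ - lamI c1 c2 σ0 σ1 m Φ) *
    (lI c1 c2 σ0 σ1 i Φ ⬝ᵥ (jac (rI c1 c2 σ0 σ1 k) Φ *ᵥ rI c1 c2 σ0 σ1 m Φ))


/- Near `Φ = 0` the symmetric block `[[a, c], [c, b]]` is positive definite (an open condition that
holds at `Φ = 0`), so `λ₁² > λ₂² > 0` are its eigenvalues. Every `rᵢ` has the shape
`(p, φ₂, -λ p, -λ φ₂)` and every `lᵢ` the shape `k⁻¹ (p, φ₂, -p/λ, -φ₂/λ)`, with `λ = λᵢ` and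
`p = (λ² - b)/(2σ₁)`, whence `lᵢ · rⱼ = kᵢ⁻¹ (1 + λⱼ/λᵢ)(pᵢ pⱼ + φ₂²)`. The first factor vanishes
when `λⱼ = -λᵢ`; Vieta's formula `(λ₁² - b)(λ₂² - b) = -c²` makes the second one vanish when
`λᵢ² ≠ λⱼ²`; and `K`, `N` are exactly the diagonal normalisations `2(p² + φ₂²)`, nonzero as
`φ₂ ≠ 0`. -/

section EigenvectorShape

variable {𝕜 : Type*} [Field 𝕜]

def rightVec (ν p φ : 𝕜) : Fin 4 → 𝕜 := ![p, φ, -ν * p, -ν * φ]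

def leftVec (k ν p φ : 𝕜) : Fin 4 → 𝕜 := k⁻¹ • ![p, φ, -(p / ν), -(φ / ν)]

theorem leftVec_dotProduct_rightVec (k ν μ p q φ : 𝕜) :
    leftVec k ν p φ ⬝ᵥ rightVec μ q φ = k⁻¹ * ((1 + μ / ν) * (p * q + φ ^ 2)) := by
  simp only [leftVec, rightVec, dotProduct, Fin.sum_univ_four, Pi.smul_apply, smul_eq_mul,
    cons_val_zero, cons_val_one, cons_val_two, cons_val_three, head_cons, tail_cons]
  ring

theorem leftVec_dotProduct_rightVec_self {ν p φ : 𝕜} (hν : ν ≠ 0) (hk : 2 * (p ^ 2 + φ ^ 2) ≠ 0) :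
    leftVec (2 * (p ^ 2 + φ ^ 2)) ν p φ ⬝ᵥ rightVec ν p φ = 1 := by
  rw [leftVec_dotProduct_rightVec, div_self hν, one_add_one_eq_two, ← sq, inv_mul_cancel₀ hk]

theorem leftVec_dotProduct_rightVec_of_eq_neg {ν μ : 𝕜} (k p q φ : 𝕜) (hν : ν ≠ 0) (h : μ = -ν) :
    leftVec k ν p φ ⬝ᵥ rightVec μ q φ = 0 := by
  rw [leftVec_dotProduct_rightVec, h, neg_div, div_self hν, add_neg_cancel, zero_mul, mul_zero]

theorem leftVec_dotProduct_rightVec_of_mul_eq {p q φ : 𝕜} (k ν μ : 𝕜) (h : p * q = -φ ^ 2) :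
    leftVec k ν p φ ⬝ᵥ rightVec μ q φ = 0 := by
  rw [leftVec_dotProduct_rightVec, h, neg_add_cancel, mul_zero, mul_zero]

end EigenvectorShape

theorem sqrt_sq_sub_add_four_mul_sq_lt_add {a b c : ℝ} (ha : 0 < a) (h : c ^ 2 < a * b) :
    √((a - b) ^ 2 + 4 * c ^ 2) < a + b := by
  have hb : 0 < b := pos_of_mul_pos_right ((sq_nonneg c).trans_lt h) ha.le
  rw [Real.sqrt_lt' (by positivity)]
  linear_combination 4 * h

theorem norm_le_eucNorm4 (Φ : Fin 4 → ℝ) : ‖Φ‖ ≤ eucNorm4 Φ := by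
  refine (pi_norm_le_iff_of_nonneg (Real.sqrt_nonneg _)).2 fun i => ?_
  rw [Real.norm_eq_abs, ← Real.sqrt_sq_eq_abs]
  exact Real.sqrt_le_sqrt (Finset.single_le_sum (fun j _ => sq_nonneg (Φ j)) (Finset.mem_univ i))

theorem exists_pos_forall_eucNorm4_lt {P : (Fin 4 → ℝ) → Prop} (h : ∀ᶠ Φ in nhds 0, P Φ) :
    ∃ κ > (0 : ℝ), ∀ Φ, eucNorm4 Φ < 2 * κ → P Φ := by
  obtain ⟨ε, hε, hball⟩ := Metric.mem_nhds_iff.1 h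
  refine ⟨ε / 2, half_pos hε, fun Φ hΦ => hball ?_⟩
  rw [Metric.mem_ball, dist_zero_right]
  linarith [norm_le_eucNorm4 Φ]

theorem ΔF_nonneg (c1 c2 σ0 σ1 : ℝ) (Φ : Fin 4 → ℝ) : 0 ≤ ΔF c1 c2 σ0 σ1 Φ := by
  unfold ΔF; positivity

theorem eventually_zero_lt_aF_and_cF_sq_lt_mul {c1 c2 σ0 σ1 : ℝ} (hc1 : c1 ≠ 0) (hc2 : c2 ≠ 0) :
    ∀ᶠ Φ in nhds 0, 0 < aF c1 σ0 Φ ∧ cF σ1 Φ ^ 2 < aF c1 σ0 Φ * bF c2 σ1 Φ := by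
  have ha : Continuous (aF c1 σ0) := by unfold aF; fun_prop
  have hb : Continuous (bF c2 σ1) := by unfold bF; fun_prop
  have hc : Continuous (cF σ1) := by unfold cF; fun_prop
  refine (continuous_const.continuousAt.eventually_lt ha.continuousAt ?_).and
    ((hc.pow 2).continuousAt.eventually_lt (ha.mul hb).continuousAt ?_) <;>
    simp only [aF, bF, cF, Pi.pow_apply, Pi.zero_apply, mul_zero, add_zero, zero_pow two_ne_zero] <;>
    positivity

def eigCoord (c2 σ1 : ℝ) (Φ : Fin 4 → ℝ) (ν : ℝ) : ℝ := (ν ^ 2 - bF c2 σ1 Φ) / (2 * σ1)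

theorem eigCoord_neg (c2 σ1 : ℝ) (Φ : Fin 4 → ℝ) (ν : ℝ) :
    eigCoord c2 σ1 Φ (-ν) = eigCoord c2 σ1 Φ ν := by
  rw [eigCoord, eigCoord, neg_sq]

theorem rI_eq (c1 c2 σ0 σ1 : ℝ) (j : Fin 4) (Φ : Fin 4 → ℝ) :
    rI c1 c2 σ0 σ1 j Φ = rightVec (lamI c1 c2 σ0 σ1 j Φ)
      (eigCoord c2 σ1 Φ (lamI c1 c2 σ0 σ1 j Φ)) (Φ 1) := by
  fin_cases j <;>
    simp only [rI, r1, r2, r3, r4, lamI, lam3, lam4, rightVec, eigCoord, neg_sq, neg_neg, neg_mul,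
      neg_div, mul_div_assoc]

section PosDefBlock

variable {c1 c2 σ0 σ1 : ℝ} {Φ : Fin 4 → ℝ}
  (ha : 0 < aF c1 σ0 Φ) (hcab : cF σ1 Φ ^ 2 < aF c1 σ0 Φ * bF c2 σ1 Φ)

include ha hcab

theorem sqrt_ΔF_lt : √(ΔF c1 c2 σ0 σ1 Φ) < aF c1 σ0 Φ + bF c2 σ1 Φ :=
  sqrt_sq_sub_add_four_mul_sq_lt_add ha hcab

theorem lam1_pos : 0 < lam1 c1 c2 σ0 σ1 Φ :=
  Real.sqrt_pos.2 (by linarith [sqrt_ΔF_lt ha hcab, Real.sqrt_nonneg (ΔF c1 c2 σ0 σ1 Φ)])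

theorem lam2_pos : 0 < lam2 c1 c2 σ0 σ1 Φ :=
  Real.sqrt_pos.2 (by linarith [sqrt_ΔF_lt ha hcab])

theorem lam1_sq :
    lam1 c1 c2 σ0 σ1 Φ ^ 2 = (aF c1 σ0 Φ + bF c2 σ1 Φ + √(ΔF c1 c2 σ0 σ1 Φ)) / 2 :=
  Real.sq_sqrt (by linarith [sqrt_ΔF_lt ha hcab, Real.sqrt_nonneg (ΔF c1 c2 σ0 σ1 Φ)])

theorem lam2_sq :
    lam2 c1 c2 σ0 σ1 Φ ^ 2 = (aF c1 σ0 Φ + bF c2 σ1 Φ - √(ΔF c1 c2 σ0 σ1 Φ)) / 2 :=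
  Real.sq_sqrt (by linarith [sqrt_ΔF_lt ha hcab])

theorem KF_eq (hσ1 : σ1 ≠ 0) :
    KF c1 c2 σ0 σ1 Φ = 2 * (eigCoord c2 σ1 Φ (lam1 c1 c2 σ0 σ1 Φ) ^ 2 + Φ 1 ^ 2) := by
  have hs := Real.sq_sqrt (ΔF_nonneg c1 c2 σ0 σ1 Φ)
  rw [KF, eigCoord, lam1_sq ha hcab]
  generalize √(ΔF c1 c2 σ0 σ1 Φ) = s at hs ⊢
  unfold ΔF cF at *
  field_simp
  linear_combination -4 * hs

theorem NF_eq (hσ1 : σ1 ≠ 0) :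
    NF c1 c2 σ0 σ1 Φ = 2 * (eigCoord c2 σ1 Φ (lam2 c1 c2 σ0 σ1 Φ) ^ 2 + Φ 1 ^ 2) := by
  have hs := Real.sq_sqrt (ΔF_nonneg c1 c2 σ0 σ1 Φ)
  rw [NF, eigCoord, lam2_sq ha hcab]
  generalize √(ΔF c1 c2 σ0 σ1 Φ) = s at hs ⊢
  unfold ΔF cF at *
  field_simp
  linear_combination -4 * hs

theorem eigCoord_lam1_mul_eigCoord_lam2 (hσ1 : σ1 ≠ 0) :
    eigCoord c2 σ1 Φ (lam1 c1 c2 σ0 σ1 Φ) * eigCoord c2 σ1 Φ (lam2 c1 c2 σ0 σ1 Φ) = -Φ 1 ^ 2 := by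
  have hs := Real.sq_sqrt (ΔF_nonneg c1 c2 σ0 σ1 Φ)
  rw [eigCoord, eigCoord, lam1_sq ha hcab, lam2_sq ha hcab]
  generalize √(ΔF c1 c2 σ0 σ1 Φ) = s at hs ⊢
  unfold ΔF cF at *
  field_simp
  linear_combination -hs

theorem lI_eq (hσ1 : σ1 ≠ 0) (i : Fin 4) :
    lI c1 c2 σ0 σ1 i Φ = leftVec (2 * (eigCoord c2 σ1 Φ (lamI c1 c2 σ0 σ1 i Φ) ^ 2 + Φ 1 ^ 2))
      (lamI c1 c2 σ0 σ1 i Φ) (eigCoord c2 σ1 Φ (lamI c1 c2 σ0 σ1 i Φ)) (Φ 1) := by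
  have hK := KF_eq ha hcab hσ1
  have hN := NF_eq ha hcab hσ1
  fin_cases i <;>
    simp only [lI, l1, l2, l3, l4, lamI, lam3, lam4, leftVec, hK, hN, eigCoord, neg_sq, div_neg,
      neg_neg, div_div]

theorem lamI_ne_zero (i : Fin 4) : lamI c1 c2 σ0 σ1 i Φ ≠ 0 := by
  fin_cases i <;>
    simp [lamI, lam3, lam4, (lam1_pos ha hcab).ne', (lam2_pos ha hcab).ne']

theorem lamI_eq_neg_or_eigCoord_mul_eq (hσ1 : σ1 ≠ 0) {i j : Fin 4} (hij : i ≠ j) :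
    lamI c1 c2 σ0 σ1 j Φ = -lamI c1 c2 σ0 σ1 i Φ ∨
      eigCoord c2 σ1 Φ (lamI c1 c2 σ0 σ1 i Φ) * eigCoord c2 σ1 Φ (lamI c1 c2 σ0 σ1 j Φ) =
        -Φ 1 ^ 2 := by
  have hpp := eigCoord_lam1_mul_eigCoord_lam2 ha hcab hσ1
  fin_cases i <;> fin_cases j <;> simp only [lamI, lam3, lam4, eigCoord_neg, neg_neg, true_or] <;>
    first
    | exact absurd rfl hij
    | exact Or.inr hpp
    | exact Or.inr (by rw [mul_comm, hpp])

end PosDefBlock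

/-- Duality of the left and right eigenvectors: there is `κ > 0` such that for
`|Φ| < 2κ` and `φ₂ ≠ 0`, the factors `K(Φ)`, `N(Φ)` are nonzero and `lᵢ(Φ) · rⱼ(Φ) = δᵢⱼ`. -/
theorem left_right_duality (c1 c2 σ0 σ1 : ℝ) (hc2 : 0 < c2) (hc12 : c2 < c1) (hσ1 : σ1 ≠ 0) :
    ∃ κ > (0:ℝ), ∀ Φ : Fin 4 → ℝ, eucNorm4 Φ < 2 * κ → Φ 1 ≠ 0 →
      KF c1 c2 σ0 σ1 Φ ≠ 0 ∧ NF c1 c2 σ0 σ1 Φ ≠ 0 ∧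
      ∀ i j : Fin 4,
        lI c1 c2 σ0 σ1 i Φ ⬝ᵥ rI c1 c2 σ0 σ1 j Φ = if i = j then 1 else 0 := by
  obtain ⟨κ, hκ, hsmall⟩ := exists_pos_forall_eucNorm4_lt
    (eventually_zero_lt_aF_and_cF_sq_lt_mul (σ0 := σ0) (σ1 := σ1) (hc2.trans hc12).ne' hc2.ne')
  refine ⟨κ, hκ, fun Φ hΦ hφ => ?_⟩
  obtain ⟨ha, hcab⟩ := hsmall Φ hΦ
  refine ⟨by rw [KF_eq ha hcab hσ1]; positivity, by rw [NF_eq ha hcab hσ1]; positivity,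
    fun i j => ?_⟩
  rw [lI_eq ha hcab hσ1, rI_eq]
  rcases eq_or_ne i j with rfl | hij
  · rw [if_pos rfl]
    exact leftVec_dotProduct_rightVec_self (lamI_ne_zero ha hcab i) (by positivity)
  rw [if_neg hij]
  rcases lamI_eq_neg_or_eigCoord_mul_eq ha hcab hσ1 hij with h | h
  · exact leftVec_dotProduct_rightVec_of_eq_neg _ _ _ _ (lamI_ne_zero ha hcab i) h
  · exact leftVec_dotProduct_rightVec_of_mul_eq _ _ _ h

end ElasticIP
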